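/- One has R_iid(s*(σ²), σ²) = (1/2)·log(σ²/D); moreover, if σ² ≤ 2D then R_iid(s*(2D − σ²), 2D − σ²) = 0. -/
import Mathlib


noncomputable section

/-- `R_iid(s, z) = (1/2) log(1+2s) + s z/((1+2s)(σ²-D)) - s D/(σ²-D)`. -/
def Riid (σ2 D s z : ℝ) : ℝ :=
  (1 / 2) * Real.log (1 + 2 * s) + s * z / ((1 + 2 * s) * (σ2 - D)) - s * D / (σ2 - D)

/-- `s*(z) = max{0, (σ² - 3D + √((σ²-D)² + 4 z D))/(4D)}`. -/
def sStar (σ2 D z : ℝ) : ℝ :=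
  max 0 ((σ2 - 3 * D + Real.sqrt ((σ2 - D) ^ 2 + 4 * z * D)) / (4 * D))

/-- `R_iid(s*(σ²), σ²) = (1/2) log(σ²/D)`; moreover, if `σ² ≤ 2D` then
`R_iid(s*(2D - σ²), 2D - σ²) = 0`. -/
theorem Riid_values (σ2 D : ℝ) (hD : 0 < D) (hDσ : D < σ2) :
    Riid σ2 D (sStar σ2 D σ2) σ2 = (1 / 2) * Real.log (σ2 / D) ∧
    (σ2 ≤ 2 * D → Riid σ2 D (sStar σ2 D (2 * D - σ2)) (2 * D - σ2) = 0) := by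
  have hσ : 0 < σ2 := hD.trans hDσ
  have hne : σ2 - D ≠ 0 := by linarith
  constructor
  · have h1 : (σ2 - D) ^ 2 + 4 * σ2 * D = (σ2 + D) ^ 2 := by ring
    have h2 : Real.sqrt ((σ2 - D) ^ 2 + 4 * σ2 * D) = σ2 + D := by
      rw [h1, Real.sqrt_sq (by linarith)]
    have hs : sStar σ2 D σ2 = (σ2 - D) / (2 * D) := by
      rw [sStar, h2, max_eq_right]
      · field_simp; ring
      · apply div_nonneg <;> linarith
    rw [hs, Riid]
    have h3 : 1 + 2 * ((σ2 - D) / (2 * D)) = σ2 / D := by field_simp; ring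
    rw [h3]
    have : (σ2 - D) / (2 * D) * σ2 / (σ2 / D * (σ2 - D)) - (σ2 - D) / (2 * D) * D / (σ2 - D) = 0 := by
      field_simp; ring
    linarith [this]
  · intro hle
    have h1 : (σ2 - D) ^ 2 + 4 * (2 * D - σ2) * D = (3 * D - σ2) ^ 2 := by ring
    have h2 : Real.sqrt ((σ2 - D) ^ 2 + 4 * (2 * D - σ2) * D) = 3 * D - σ2 := by
      rw [h1, Real.sqrt_sq (by linarith)]
    have hs : sStar σ2 D (2 * D - σ2) = 0 := by
      rw [sStar, h2]
      norm_num
    rw [hs, Riid]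
    simp
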